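/- Let Ψ(s) = (1+s)log(1+s) + (1−s)log(1−s) on (−1,1). For every u ∈ (−1,1) there exist constants c_u > 0 and C_u ≥ 0 such that |Ψ'(s)| ≤ c_u Ψ'(s)(s − u) + C_u for all s ∈ (−1,1). -/

import Mathlib

/-- The convex part of the Flory–Huggins logarithmic potential. -/
noncomputable def PsiFH (s : ℝ) : ℝ :=
  (1 + s) * Real.log (1 + s) + (1 - s) * Real.log (1 - s)

noncomputable def fFH (s : ℝ) : ℝ := Real.log (1 + s) - Real.log (1 - s)

lemma deriv_PsiFH (s : ℝ) (h1 : -1 < s) (h2 : s < 1) :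
    deriv PsiFH s = fFH s := by
  have hp : (0:ℝ) < 1 + s := by linarith
  have hq : (0:ℝ) < 1 - s := by linarith
  have h1' : HasDerivAt (fun x : ℝ => 1 + x) 1 s := by
    simpa using (hasDerivAt_id s).const_add 1
  have h2' : HasDerivAt (fun x : ℝ => 1 - x) (-1) s := by
    simpa using (hasDerivAt_id s).const_sub 1
  have A : HasDerivAt (fun x : ℝ => (1 + x) * Real.log (1 + x))
      (1 * Real.log (1 + s) + (1 + s) * (1 / (1 + s))) s :=
    h1'.mul (h1'.log hp.ne')
  have B : HasDerivAt (fun x : ℝ => (1 - x) * Real.log (1 - x))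
      ((-1) * Real.log (1 - s) + (1 - s) * (-1 / (1 - s))) s :=
    h2'.mul (h2'.log hq.ne')
  have : deriv (fun x : ℝ => (1 + x) * Real.log (1 + x) + (1 - x) * Real.log (1 - x)) s = _ :=
    (A.add B).deriv
  rw [show PsiFH = fun x : ℝ => (1 + x) * Real.log (1 + x) + (1 - x) * Real.log (1 - x)
    from rfl, this, fFH]
  field_simp
  ring

lemma fFH_mono {a b : ℝ} (ha : -1 < a) (hb : b < 1) (hab : a ≤ b) : fFH a ≤ fFH b := by
  have h1 : Real.log (1 + a) ≤ Real.log (1 + b) := by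
    apply Real.log_le_log (by linarith) (by linarith)
  have h2 : Real.log (1 - b) ≤ Real.log (1 - a) := by
    apply Real.log_le_log (by linarith) (by linarith)
  simp only [fFH]; linarith

set_option maxHeartbeats 1000000 in
theorem psi_deriv_bound (u : ℝ) (hu₁ : -1 < u) (hu₂ : u < 1) :
    ∃ c : ℝ, 0 < c ∧ ∃ C : ℝ, 0 ≤ C ∧
      ∀ s : ℝ, -1 < s → s < 1 →
        |deriv PsiFH s| ≤ c * deriv PsiFH s * (s - u) + C := by
  have hmu : (0:ℝ) < 1 - u := by linarith
  have hpu : (0:ℝ) < 1 + u := by linarith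
  have hp1 : (0:ℝ) < 2/(1-u) := by positivity
  have hp2 : (0:ℝ) < 2/(1+u) := by positivity
  set c : ℝ := 2/(1-u) + 2/(1+u) with hc
  set M : ℝ := |fFH ((u+1)/2)| + |fFH ((u-1)/2)| with hM
  set C : ℝ := M + 2*c*|fFH u| with hCdef
  have hcpos : 0 < c := by rw [hc]; linarith
  have hc1 : 2/(1-u) ≤ c := by rw [hc]; linarith
  have hc2 : 2/(1+u) ≤ c := by rw [hc]; linarith
  have hM1 : fFH ((u+1)/2) ≤ M := by
    rw [hM]; have := le_abs_self (fFH ((u+1)/2)); have := abs_nonneg (fFH ((u-1)/2)); linarith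
  have hM2 : -fFH ((u-1)/2) ≤ M := by
    rw [hM]; have := neg_abs_le (fFH ((u-1)/2)); have := abs_nonneg (fFH ((u+1)/2)); linarith
  have hMnn : 0 ≤ M := by
    rw [hM]; have := abs_nonneg (fFH ((u+1)/2)); have := abs_nonneg (fFH ((u-1)/2)); linarith
  have hCform : C = M + 2*c*|fFH u| := hCdef
  have hCnn : 0 ≤ C := by
    rw [hCform]
    have := abs_nonneg (fFH u)
    nlinarith
  have e1 : 2/(1-u) * ((1-u)/2) = 1 := by
    rw [div_mul_div_comm, mul_comm (1-u) 2]
    exact div_self (by nlinarith : (0:ℝ) < 2*(1-u)).ne'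
  have e2 : 2/(1+u) * ((1+u)/2) = 1 := by
    rw [div_mul_div_comm, mul_comm (1+u) 2]
    exact div_self (by nlinarith : (0:ℝ) < 2*(1+u)).ne'
  clear_value c M C
  refine ⟨c, hcpos, C, hCnn, ?_⟩
  intro s hs1 hs2
  rw [deriv_PsiFH s hs1 hs2]
  have hchord : fFH u * (s - u) ≤ fFH s * (s - u) := by
    rcases le_total u s with h | h
    · have := fFH_mono hu₁ hs2 h
      nlinarith
    · have := fFH_mono hs1 hu₂ h
      nlinarith
  have hlow : -(2*c*|fFH u|) ≤ c * fFH s * (s - u) := by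
    have h1 : -(2*|fFH u|) ≤ fFH u * (s - u) := by
      nlinarith [le_abs_self (fFH u), neg_abs_le (fFH u), abs_nonneg (fFH u)]
    nlinarith [mul_le_mul_of_nonneg_left hchord hcpos.le,
      mul_le_mul_of_nonneg_left h1 hcpos.le]
  by_cases hfs : 0 ≤ fFH s
  · rw [abs_of_nonneg hfs]
    by_cases hsm : (u+1)/2 ≤ s
    · have h1 : (1-u)/2 ≤ s - u := by linarith
      have hc1' : 1 ≤ c * (s - u) := by
        have := mul_le_mul hc1 h1 (by linarith) hcpos.le
        linarith [e1]
      nlinarith [mul_le_mul_of_nonneg_left hc1' hfs]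
    · have hfm : fFH s ≤ fFH ((u+1)/2) := fFH_mono hs1 (by linarith) (by linarith)
      rw [hCform]; linarith
  · push_neg at hfs
    rw [abs_of_neg hfs]
    by_cases hsm : s ≤ (u-1)/2
    · have h1 : (1+u)/2 ≤ u - s := by linarith
      have hc2' : 1 ≤ c * (u - s) := by
        have := mul_le_mul hc2 h1 (by linarith) hcpos.le
        linarith [e2]
      have hnfs : 0 ≤ -fFH s := by linarith
      nlinarith [mul_le_mul_of_nonneg_left hc2' hnfs]
    · push_neg at hsm
      have hfm : fFH ((u-1)/2) ≤ fFH s := fFH_mono (by linarith) hs2 (by linarith)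
      rw [hCform]; linarith
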